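/- Lagrange inversion in operator form: for f ∈ y + y²ℂ[[y]] invertible, the binomial-type polynomials p_n attached to f satisfy p_n(x) = x · (D/f(D))^n · x^{n-1} for all n ≥ 1, where D/f(D) is the substitution of D into the power series y/f(y) ∈ 1 + yℂ[[y]]. -/

import Mathlib

open Polynomial Nat

/-- The operator `g(D)` on `ℂ[x]`. -/
noncomputable def opSubst (g : PowerSeries ℂ) (p : Polynomial ℂ) : Polynomial ℂ :=
  ∑ k ∈ Finset.range (p.natDegree + 1),
    (PowerSeries.coeff (R := ℂ) k g) • (Polynomial.derivative^[k] p)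

/-- `p` is the binomial-type family attached to `f`. -/
def IsGenFamily (f : PowerSeries ℂ) (p : ℕ → Polynomial ℂ) : Prop :=
  ∀ m : ℕ, (1 / (m ! : ℂ)) • (X ^ m : Polynomial ℂ) =
    ∑ n ∈ Finset.range (m + 1),
      ((PowerSeries.coeff (R := ℂ) m (f ^ n)) / (n ! : ℂ)) • p n

lemma opSubst_eq (g : PowerSeries ℂ) (p : Polynomial ℂ) {N : ℕ} (hN : p.natDegree < N) :
    opSubst g p = ∑ k ∈ Finset.range N,
      (PowerSeries.coeff (R := ℂ) k g) • (Polynomial.derivative^[k] p) := by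
  rw [opSubst]
  apply Finset.sum_subset (Finset.range_subset_range.2 hN)
  intro k _ hk
  rw [Polynomial.iterate_derivative_eq_zero (lt_of_lt_of_le (Nat.lt_succ_self _)
    (Nat.not_lt.1 (fun h => hk (Finset.mem_range.2 h)))), smul_zero]

lemma opSubst_add (g : PowerSeries ℂ) (p q : Polynomial ℂ) :
    opSubst g (p + q) = opSubst g p + opSubst g q := by
  set N := max p.natDegree q.natDegree + 1 with hNdef
  rw [opSubst_eq g p (N := N) (by omega), opSubst_eq g q (N := N) (by omega),
    opSubst_eq g (p+q) (N := N) (lt_of_le_of_lt (Polynomial.natDegree_add_le p q) (by omega)),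
    ← Finset.sum_add_distrib]
  simp [smul_add]

lemma opSubst_smul (g : PowerSeries ℂ) (c : ℂ) (p : Polynomial ℂ) :
    opSubst g (c • p) = c • opSubst g p := by
  rw [opSubst_eq g (c • p) (lt_of_le_of_lt (Polynomial.natDegree_smul_le c p)
    (Nat.lt_succ_self _)), opSubst, Finset.smul_sum]
  apply Finset.sum_congr rfl
  intro k _
  rw [Polynomial.iterate_derivative_smul, smul_comm]

lemma opSubst_zero (g : PowerSeries ℂ) : opSubst g 0 = 0 := by
  simp [opSubst]

lemma opSubst_sum {ι : Type*} (g : PowerSeries ℂ) (s : Finset ι) (F : ι → Polynomial ℂ) :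
    opSubst g (∑ i ∈ s, F i) = ∑ i ∈ s, opSubst g (F i) := by
  classical
  induction s using Finset.induction with
  | empty => simp [opSubst_zero]
  | insert _ _ h ih => rw [Finset.sum_insert h, Finset.sum_insert h, opSubst_add, ih]

lemma opSubst_add_left (g h : PowerSeries ℂ) (p : Polynomial ℂ) :
    opSubst (g + h) p = opSubst g p + opSubst h p := by
  rw [opSubst, opSubst, opSubst, ← Finset.sum_add_distrib]
  simp [add_smul]

lemma opSubst_sub_left (g h : PowerSeries ℂ) (p : Polynomial ℂ) :
    opSubst (g - h) p = opSubst g p - opSubst h p := by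
  rw [opSubst, opSubst, opSubst, ← Finset.sum_sub_distrib]
  simp [sub_smul]

lemma opSubst_smul_left (c : ℂ) (g : PowerSeries ℂ) (p : Polynomial ℂ) :
    opSubst (c • g) p = c • opSubst g p := by
  rw [opSubst, opSubst, Finset.smul_sum]
  simp [mul_smul]

lemma opSubst_one (p : Polynomial ℂ) : opSubst 1 p = p := by
  rw [opSubst, Finset.sum_eq_single 0]
  · simp
  · intro k _ hk
    simp [PowerSeries.coeff_one, hk]
  · simp

lemma natDegree_opSubst_lt (g : PowerSeries ℂ) (p : Polynomial ℂ) {N : ℕ}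
    (hN : p.natDegree < N) : (opSubst g p).natDegree < N := by
  rw [opSubst]
  refine lt_of_le_of_lt (Polynomial.natDegree_sum_le_of_forall_le _ _ ?_) hN
  intro k _
  refine le_trans (Polynomial.natDegree_smul_le _ _) ?_
  exact le_trans (Polynomial.natDegree_iterate_derivative _ _) (Nat.sub_le _ _)

lemma opSubst_mul (g h : PowerSeries ℂ) (p : Polynomial ℂ) :
    opSubst (g * h) p = opSubst g (opSubst h p) := by
  set N := p.natDegree + 1 with hN
  have hpN : p.natDegree < N := Nat.lt_succ_self _
  rw [opSubst_eq (g*h) p hpN, opSubst_eq g _ (natDegree_opSubst_lt h p hpN),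
    opSubst_eq h p hpN]
  have key : ∀ i j : ℕ, N ≤ i + j →
      (Polynomial.derivative^[i+j] p : Polynomial ℂ) = 0 := by
    intro i j hij
    exact Polynomial.iterate_derivative_eq_zero (by omega)
  calc ∑ k ∈ Finset.range N, (PowerSeries.coeff (R := ℂ) k (g*h)) • (Polynomial.derivative^[k] p)
      = ∑ k ∈ Finset.range N, ∑ ij ∈ Finset.HasAntidiagonal.antidiagonal k,
          (PowerSeries.coeff (R := ℂ) ij.1 g * PowerSeries.coeff (R := ℂ) ij.2 h) •
            (Polynomial.derivative^[ij.1 + ij.2] p) := by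
        refine Finset.sum_congr rfl fun k _ => ?_
        rw [PowerSeries.coeff_mul, Finset.sum_smul]
        refine Finset.sum_congr rfl fun ij hij => ?_
        rw [(Finset.HasAntidiagonal.mem_antidiagonal.1 hij)]
    _ = ∑ ij ∈ (Finset.range N).biUnion Finset.HasAntidiagonal.antidiagonal,
          (PowerSeries.coeff (R := ℂ) ij.1 g * PowerSeries.coeff (R := ℂ) ij.2 h) •
            (Polynomial.derivative^[ij.1 + ij.2] p) := by
        rw [Finset.sum_biUnion]
        intro a _ b _ hab
        simp only [Finset.disjoint_left, Finset.HasAntidiagonal.mem_antidiagonal]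
        intro x hx hx'
        exact hab (hx ▸ hx'.symm ▸ rfl)
    _ = ∑ ij ∈ Finset.range N ×ˢ Finset.range N,
          (PowerSeries.coeff (R := ℂ) ij.1 g * PowerSeries.coeff (R := ℂ) ij.2 h) •
            (Polynomial.derivative^[ij.1 + ij.2] p) := by
        apply Finset.sum_subset
        · intro x hx
          simp only [Finset.mem_biUnion, Finset.mem_range,
            Finset.HasAntidiagonal.mem_antidiagonal] at hx
          obtain ⟨k, hk, hxk⟩ := hx
          simp only [Finset.mem_product, Finset.mem_range]
          omega
        · intro x hx hx'
          simp only [Finset.mem_biUnion, Finset.mem_range,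
            Finset.HasAntidiagonal.mem_antidiagonal, not_exists, not_and] at hx'
          rw [key x.1 x.2 (by
            by_contra hc
            exact hx' (x.1+x.2) (by omega) rfl), smul_zero]
    _ = ∑ i ∈ Finset.range N, ∑ j ∈ Finset.range N,
          (PowerSeries.coeff (R := ℂ) i g * PowerSeries.coeff (R := ℂ) j h) •
            (Polynomial.derivative^[i + j] p) := Finset.sum_product _ _ _
    _ = ∑ i ∈ Finset.range N, (PowerSeries.coeff (R := ℂ) i g) •
          (Polynomial.derivative^[i] (∑ j ∈ Finset.range N,
            (PowerSeries.coeff (R := ℂ) j h) • (Polynomial.derivative^[j] p))) := by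
        refine Finset.sum_congr rfl fun i _ => ?_
        rw [Polynomial.iterate_derivative_sum, Finset.smul_sum]
        refine Finset.sum_congr rfl fun j _ => ?_
        rw [Polynomial.iterate_derivative_smul, mul_smul,
          ← Function.iterate_add_apply]

lemma iterate_derivative_X_mul (k : ℕ) (p : Polynomial ℂ) :
    Polynomial.derivative^[k+1] (X * p) =
      X * Polynomial.derivative^[k+1] p + ((k:ℂ)+1) • Polynomial.derivative^[k] p := by
  induction k with
  | zero =>
    simp [Polynomial.derivative_mul, add_comm, one_smul]
  | succ k ih =>
    rw [Function.iterate_succ_apply', ih]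
    simp only [map_add, Polynomial.derivative_mul, Polynomial.derivative_X, one_mul,
      Polynomial.derivative_smul, ← Function.iterate_succ_apply']
    push_cast
    module

lemma opSubst_X_mul (g : PowerSeries ℂ) (p : Polynomial ℂ) :
    opSubst g (X * p) = X * opSubst g p +
      opSubst (PowerSeries.derivative ℂ g) p := by
  set N := p.natDegree + 1 with hNdef
  have h1 : (X * p).natDegree < N + 1 := by
    rcases eq_or_ne p 0 with rfl | hp
    · simp
    · rw [Polynomial.natDegree_X_mul hp]; omega
  rw [opSubst_eq g (X*p) h1, opSubst_eq g p (N := N+1) (by omega),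
    opSubst_eq (PowerSeries.derivative ℂ g) p (N := N) (by omega),
    Finset.sum_range_succ' _ N,
    Finset.sum_range_succ' (fun k => (PowerSeries.coeff (R := ℂ) k g) •
      (Polynomial.derivative^[k] p)) N]
  simp only [Function.iterate_zero_apply, iterate_derivative_X_mul]
  have hdg : ∀ k : ℕ, (PowerSeries.coeff (R := ℂ) k (PowerSeries.derivative ℂ g)) •
      (Polynomial.derivative^[k] p) = ((k:ℂ)+1) •
        ((PowerSeries.coeff (R := ℂ) (k+1) g) • Polynomial.derivative^[k] p) := by
    intro k
    rw [PowerSeries.coeff_derivative, mul_comm, mul_smul]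
  have hsw : ∀ k : ℕ, (PowerSeries.coeff (R := ℂ) (k+1) g) • (((k:ℂ)+1) •
      Polynomial.derivative^[k] p) = ((k:ℂ)+1) •
        ((PowerSeries.coeff (R := ℂ) (k+1) g) • Polynomial.derivative^[k] p) := fun k =>
    smul_comm _ _ _
  simp only [smul_add, Finset.sum_add_distrib, hdg, hsw, mul_add, Finset.mul_sum,
    mul_smul_comm]
  abel

lemma opSubst_X (p : Polynomial ℂ) :
    opSubst PowerSeries.X p = Polynomial.derivative p := by
  rw [opSubst_eq _ p (N := p.natDegree + 2) (by omega),
    Finset.sum_eq_single 1]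
  · simp
  · intro k _ hk
    rw [PowerSeries.coeff_X, if_neg hk, zero_smul]
  · intro h; simp at h

lemma opSubst_X_mul_left (h : PowerSeries ℂ) (p : Polynomial ℂ) :
    opSubst (PowerSeries.X * h) p = opSubst h (Polynomial.derivative p) := by
  rw [mul_comm, opSubst_mul, opSubst_X]

lemma opSubst_one_poly (g : PowerSeries ℂ) :
    opSubst g (1 : Polynomial ℂ) = (PowerSeries.coeff (R := ℂ) 0 g) • 1 := by
  rw [opSubst]
  simp

-- injectivity
lemma opSubst_inj (f : PowerSeries ℂ) (h0 : PowerSeries.coeff (R := ℂ) 0 f = 0)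
    (h1 : PowerSeries.coeff (R := ℂ) 1 f = 1) (s : Polynomial ℂ)
    (hs : opSubst f s = 0) (hs0 : s.eval 0 = 0) : s = 0 := by
  by_contra hne
  rcases Nat.eq_zero_or_pos s.natDegree with hd | hd
  · -- s is a nonzero constant
    have := Polynomial.eq_C_of_natDegree_eq_zero hd
    rw [this] at hs0
    simp at hs0
    exact hne (by rw [this, hs0, map_zero])
  · set d := s.natDegree with hddef
    have hco : (opSubst f s).coeff (d - 1) = (d : ℂ) * s.coeff d := by
      rw [opSubst, Polynomial.finset_sum_coeff]
      rw [Finset.sum_eq_single 1]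
      · rw [Polynomial.coeff_smul, h1, one_smul, Polynomial.coeff_iterate_derivative]
        rw [Nat.sub_add_cancel hd]
        simp [Nat.descFactorial_one]
      · intro k hk hk1
        rw [Polynomial.coeff_smul]
        rcases Nat.eq_zero_or_pos k with rfl | hkpos
        · rw [h0, zero_smul]
        · have hk2 : 2 ≤ k := by omega
          rw [Polynomial.coeff_iterate_derivative,
            Polynomial.coeff_eq_zero_of_natDegree_lt (by omega)]
          simp
      · intro hmem
        exact absurd (Finset.mem_range.2 (by omega)) hmem
    rw [hs, Polynomial.coeff_zero] at hco
    have hld : s.coeff d ≠ 0 := Polynomial.leadingCoeff_ne_zero.2 hne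
    have hdne : (d : ℂ) ≠ 0 := Nat.cast_ne_zero.2 (by omega)
    rcases mul_eq_zero.1 hco.symm with h | h
    · exact hdne h
    · exact hld h

section
variable (f : PowerSeries ℂ)

lemma f_eq_X_mul (h0 : PowerSeries.coeff (R := ℂ) 0 f = 0) : f = PowerSeries.X *
    (PowerSeries.mk fun k => PowerSeries.coeff (R := ℂ) (k + 1) f) := by
  ext n
  cases n with
  | zero => simpa using h0
  | succ n => rw [PowerSeries.coeff_succ_X_mul, PowerSeries.coeff_mk]

lemma coeff_zero_A (h1 : PowerSeries.coeff (R := ℂ) 1 f = 1) : PowerSeries.constantCoeff (R := ℂ)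
    (PowerSeries.mk fun k => PowerSeries.coeff (R := ℂ) (k + 1) f) = 1 := by
  simpa [← PowerSeries.coeff_zero_eq_constantCoeff] using h1

lemma coeff_pow_lt (h0 : PowerSeries.coeff (R := ℂ) 0 f = 0) (n j : ℕ) (hj : j < n) : PowerSeries.coeff (R := ℂ) j (f ^ n) = 0 := by
  rw [f_eq_X_mul f h0, mul_pow, PowerSeries.coeff_X_pow_mul', if_neg (by omega)]

lemma coeff_pow_self (h0 : PowerSeries.coeff (R := ℂ) 0 f = 0) (h1 : PowerSeries.coeff (R := ℂ) 1 f = 1) (n : ℕ) : PowerSeries.coeff (R := ℂ) n (f ^ n) = 1 := by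
  rw [f_eq_X_mul f h0, mul_pow]
  have := PowerSeries.coeff_X_pow_mul
    ((PowerSeries.mk fun k => PowerSeries.coeff (R := ℂ) (k + 1) f) ^ n) n 0
  rw [zero_add] at this
  rw [this, PowerSeries.coeff_zero_eq_constantCoeff, map_pow, coeff_zero_A f h1, one_pow]

end

noncomputable def QQ (f : PowerSeries ℂ) : ℕ → Polynomial ℂ := fun n =>
  if n = 0 then 1 else
    X * opSubst (((PowerSeries.mk fun k => PowerSeries.coeff (R := ℂ) (k + 1) f)⁻¹) ^ n)
      (X ^ (n - 1))

lemma QQ_succ (f : PowerSeries ℂ) (m : ℕ) :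
    QQ f (m + 1) = X * opSubst
      (((PowerSeries.mk fun k => PowerSeries.coeff (R := ℂ) (k + 1) f)⁻¹) ^ (m+1)) (X ^ m) := by
  simp [QQ]

lemma key_step (f : PowerSeries ℂ) (h0 : PowerSeries.coeff (R := ℂ) 0 f = 0)
    (h1 : PowerSeries.coeff (R := ℂ) 1 f = 1) (n : ℕ) (hn : 1 ≤ n) :
    opSubst f (QQ f n) = (n : ℂ) • QQ f (n - 1) := by
  set A := (PowerSeries.mk fun k => PowerSeries.coeff (R := ℂ) (k + 1) f) with hAdef
  set G := A⁻¹ with hGdef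
  have hA0 : PowerSeries.constantCoeff (R := ℂ) A ≠ 0 := by
    rw [coeff_zero_A f h1]; exact one_ne_zero
  have hAG : A * G = 1 := PowerSeries.mul_inv_cancel A hA0
  have hG0 : PowerSeries.coeff (R := ℂ) 0 G = 1 := by
    rw [PowerSeries.coeff_zero_eq_constantCoeff, hGdef, PowerSeries.constantCoeff_inv,
      coeff_zero_A f h1, inv_one]
  obtain ⟨m, rfl⟩ : ∃ m, n = m + 1 := ⟨n - 1, by omega⟩
  rcases Nat.eq_zero_or_pos m with rfl | hm
  · -- n = 1
    rw [QQ_succ, pow_one, pow_zero, opSubst_one_poly, hG0, one_smul, mul_one]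
    have : (X : Polynomial ℂ).natDegree < 2 := by simp
    rw [opSubst_eq f X this]
    simp [Finset.sum_range_succ, h0, h1, QQ]
  · obtain ⟨k, rfl⟩ : ∃ k, m = k + 1 := ⟨m - 1, by omega⟩
    -- n = k + 2
    set df := PowerSeries.derivative ℂ f with hdfdef
    set dG := PowerSeries.derivative ℂ G with hdGdef
    have hdf : df = A + PowerSeries.X * PowerSeries.derivative ℂ A := by
      rw [hdfdef]
      conv_lhs => rw [f_eq_X_mul f h0, ← hAdef]
      rw [Derivation.leibniz, smul_eq_mul, smul_eq_mul, PowerSeries.derivative_X, mul_one]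
      ring
    have hdAG : (PowerSeries.derivative ℂ A) * G + A * dG = 0 := by
      have := congrArg (PowerSeries.derivative ℂ) hAG
      rw [Derivation.leibniz, smul_eq_mul, smul_eq_mul, Derivation.map_one_eq_zero] at this
      rw [← this]; ring
    -- (i)
    have hi : f * G ^ (k+1+1) = PowerSeries.X * G ^ (k+1) := by
      conv_lhs => rw [f_eq_X_mul f h0, ← hAdef]
      rw [show PowerSeries.X * A * G^(k+1+1) = PowerSeries.X * G^(k+1) * (A * G) by ring,
        hAG, mul_one]
    -- (ii)
    have hii : df * G ^ (k+1+1) = G^(k+1) - PowerSeries.X * (dG * G^k) := by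
      linear_combination (G^(k+1) - PowerSeries.X * dG * G^k) * hAG
        + (PowerSeries.X * G^(k+1)) * hdAG + (G^(k+1+1)) * hdf
    -- derivative of G^(k+1)
    have hdGpow : PowerSeries.derivative ℂ (G ^ (k+1)) = ((k:ℂ)+1) • (dG * G^k) := by
      rw [Derivation.leibniz_pow, smul_eq_mul,
        show ((k:ℂ)+1) = ((k+1:ℕ):ℂ) by push_cast; ring, Nat.cast_smul_eq_nsmul]
      simp [mul_comm]
      exact Or.inl (Or.inl rfl)
    have hQ2 : QQ f (k+1+1) = X * opSubst (G^(k+1+1)) (X^(k+1)) := by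
      rw [QQ_succ, ← hAdef, ← hGdef]
    have hQ1 : QQ f (k+1) = X * opSubst (G^(k+1)) (X^k) := by
      rw [QQ_succ, ← hAdef, ← hGdef]
    set r := opSubst (G^(k+1+1)) ((X:Polynomial ℂ)^(k+1)) with hrdef
    have step2 : opSubst f r = ((k+1:ℕ):ℂ) • opSubst (G^(k+1)) ((X:Polynomial ℂ)^k) := by
      rw [hrdef, ← opSubst_mul, hi, opSubst_X_mul_left, Polynomial.derivative_X_pow,
        Nat.add_sub_cancel, ← Polynomial.smul_eq_C_mul, opSubst_smul]
    have step3 : opSubst df r = QQ f (k+1) := by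
      have hne : (X:Polynomial ℂ)^(k+1) = X * X^k := by ring
      rw [hrdef, ← opSubst_mul, hii, opSubst_sub_left, opSubst_X_mul_left,
        Polynomial.derivative_X_pow, Nat.add_sub_cancel, ← Polynomial.smul_eq_C_mul,
        opSubst_smul, hne, opSubst_X_mul, hdGpow, opSubst_smul_left, hQ1]
      push_cast
      module
    calc opSubst f (QQ f (k+1+1))
        = X * opSubst f r + opSubst df r := by
          rw [hQ2, opSubst_X_mul, hdfdef, hrdef]
      _ = X * (((k+1:ℕ):ℂ) • opSubst (G^(k+1)) ((X:Polynomial ℂ)^k)) + QQ f (k+1) := by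
          rw [step2, step3]
      _ = ((k+1+1:ℕ):ℂ) • QQ f (k+1+1-1) := by
          rw [show k+1+1-1 = k+1 from rfl, hQ1, mul_smul_comm]
          push_cast
          module

lemma opSubst_sub (g : PowerSeries ℂ) (p q : Polynomial ℂ) :
    opSubst g (p - q) = opSubst g p - opSubst g q := by
  have : p - q = p + (-1 : ℂ) • q := by module
  rw [this, opSubst_add, opSubst_smul]
  module

lemma opSubst_pow (g : PowerSeries ℂ) (n : ℕ) (p : Polynomial ℂ) :
    opSubst (g ^ n) p = (opSubst g)^[n] p := by
  induction n generalizing p with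
  | zero => simpa using opSubst_one p
  | succ n IH =>
    rw [pow_succ, opSubst_mul, Function.iterate_succ_apply, IH]

lemma genFamily_unique (f : PowerSeries ℂ) (h0 : PowerSeries.coeff (R := ℂ) 0 f = 0)
    (h1 : PowerSeries.coeff (R := ℂ) 1 f = 1) (p q : ℕ → Polynomial ℂ)
    (hp : IsGenFamily f p) (hq : IsGenFamily f q) : ∀ n, p n = q n := by
  intro n
  induction n using Nat.strong_induction_on with
  | _ n IH =>
  have h := (hp n).symm.trans (hq n)
  rw [Finset.sum_range_succ, Finset.sum_range_succ] at h
  have hs : ∑ k ∈ Finset.range n, ((PowerSeries.coeff (R := ℂ) n (f ^ k)) / (k ! : ℂ)) • p k =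
      ∑ k ∈ Finset.range n, ((PowerSeries.coeff (R := ℂ) n (f ^ k)) / (k ! : ℂ)) • q k :=
    Finset.sum_congr rfl fun k hk => by rw [IH k (Finset.mem_range.1 hk)]
  rw [hs, add_left_cancel_iff, coeff_pow_self f h0 h1] at h
  have hne : (1 : ℂ) / (n ! : ℂ) ≠ 0 := by
    simp [Nat.factorial_ne_zero]
  exact smul_right_injective _ hne h

lemma QQ_zero (f : PowerSeries ℂ) : QQ f 0 = 1 := by simp [QQ]

lemma QQ_eval_zero (f : PowerSeries ℂ) (n : ℕ) (hn : 1 ≤ n) :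
    (QQ f n).eval 0 = 0 := by
  rw [QQ]
  rw [if_neg (by omega)]
  simp

-- the convolution identity
lemma conv_id (f : PowerSeries ℂ) (h0 : PowerSeries.coeff (R := ℂ) 0 f = 0) (m n : ℕ) :
    ∑ k ∈ Finset.range m, PowerSeries.coeff (R := ℂ) (k+1) f *
      PowerSeries.coeff (R := ℂ) (m - (k+1)) (f ^ n) = PowerSeries.coeff (R := ℂ) m (f ^ (n+1)) := by
  rw [show f^(n+1) = f * f^n from by ring, PowerSeries.coeff_mul, Finset.Nat.sum_antidiagonal_eq_sum_range_succ_mk,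
    Finset.sum_range_succ' _ m]
  simp [h0]

lemma QQ_genFamily (f : PowerSeries ℂ) (h0 : PowerSeries.coeff (R := ℂ) 0 f = 0)
    (h1 : PowerSeries.coeff (R := ℂ) 1 f = 1) : IsGenFamily f (QQ f) := by
  intro m
  induction m using Nat.strong_induction_on with
  | _ m IH =>
  set L := (1 / (m ! : ℂ)) • (X ^ m : Polynomial ℂ) with hL
  set R := ∑ n ∈ Finset.range (m + 1),
      ((PowerSeries.coeff (R := ℂ) m (f ^ n)) / (n ! : ℂ)) • QQ f n with hR
  have hsub : L - R = 0 := by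
    apply opSubst_inj f h0 h1
    · rw [opSubst_sub, sub_eq_zero]
      set W := ∑ n ∈ Finset.range m,
        ((PowerSeries.coeff (R := ℂ) m (f ^ (n+1))) / (n ! : ℂ)) • QQ f n with hW
      have hLW : opSubst f L = W := by
        rw [hL, opSubst_smul, opSubst_eq f (X^m) (N := m+1)
          (by simp [Polynomial.natDegree_X_pow]),
          Finset.sum_range_succ' _ m]
        simp only [Function.iterate_zero_apply, h0, zero_smul, add_zero,
          Polynomial.iterate_derivative_X_pow_eq_smul]
        rw [Finset.smul_sum]
        calc ∑ k ∈ Finset.range m, (1/(m ! : ℂ)) • ((PowerSeries.coeff (R := ℂ) (k+1) f) •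
              ((m.descFactorial (k+1) : ℂ) • X ^ (m - (k+1))))
            = ∑ k ∈ Finset.range m, (PowerSeries.coeff (R := ℂ) (k+1) f) •
              ((1 / ((m - (k+1))! : ℂ)) • X ^ (m - (k+1))) := by
              refine Finset.sum_congr rfl fun k hk => ?_
              have hkm : k + 1 ≤ m := Finset.mem_range.1 hk
              have hfac : ((m - (k+1))! : ℂ) * (m.descFactorial (k+1) : ℂ) = (m ! : ℂ) := by
                rw [← Nat.cast_mul, Nat.factorial_mul_descFactorial hkm]
              have hne : ((m - (k+1))! : ℂ) ≠ 0 := Nat.cast_ne_zero.2 (Nat.factorial_ne_zero _)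
              have hne2 : ((m:ℕ)! : ℂ) ≠ 0 := Nat.cast_ne_zero.2 (Nat.factorial_ne_zero _)
              rw [smul_smul, smul_smul, smul_smul]
              congr 1
              have hd : (m.descFactorial (k+1) : ℂ) =
                  ((m - k : ℕ) : ℂ) * (m.descFactorial k : ℂ) := by
                exact_mod_cast congrArg (Nat.cast : ℕ → ℂ) (Nat.descFactorial_succ m k)
              field_simp
              linear_combination (PowerSeries.coeff (R := ℂ) (k+1) f) * hfac
          _ = ∑ k ∈ Finset.range m, (PowerSeries.coeff (R := ℂ) (k+1) f) •
              (∑ n ∈ Finset.range (m - (k+1) + 1),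
                ((PowerSeries.coeff (R := ℂ) (m - (k+1)) (f ^ n)) / (n ! : ℂ)) • QQ f n) := by
              refine Finset.sum_congr rfl fun k hk => ?_
              rw [IH (m - (k+1)) (by have := Finset.mem_range.1 hk; omega)]
          _ = ∑ k ∈ Finset.range m, ∑ n ∈ Finset.range (m - (k+1) + 1),
              ((PowerSeries.coeff (R := ℂ) (k+1) f) * (PowerSeries.coeff (R := ℂ) (m - (k+1)) (f ^ n))
                / (n ! : ℂ)) • QQ f n := by
              refine Finset.sum_congr rfl fun k hk => ?_
              rw [Finset.smul_sum]
              refine Finset.sum_congr rfl fun n _ => ?_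
              rw [smul_smul]
              congr 1
              ring
          _ = ∑ k ∈ Finset.range m, ∑ n ∈ Finset.range m,
              ((PowerSeries.coeff (R := ℂ) (k+1) f) * (PowerSeries.coeff (R := ℂ) (m - (k+1)) (f ^ n))
                / (n ! : ℂ)) • QQ f n := by
              refine Finset.sum_congr rfl fun k hk => ?_
              have hkm : k + 1 ≤ m := Finset.mem_range.1 hk
              apply Finset.sum_subset
              · exact Finset.range_subset_range.2 (by omega)
              · intro n hn1 hn
                rw [coeff_pow_lt f h0 n (m - (k+1)) (by simp at hn1 hn ⊢; omega)]
                simp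
          _ = W := by
              rw [hW, Finset.sum_comm]
              refine Finset.sum_congr rfl fun n _ => ?_
              rw [← Finset.sum_smul, ← conv_id f h0 m n, Finset.sum_div]
      have hRW : opSubst f R = W := by
        rw [hR, opSubst_sum]
        have : ∀ n ∈ Finset.range (m+1), opSubst f
            (((PowerSeries.coeff (R := ℂ) m (f ^ n)) / (n ! : ℂ)) • QQ f n) =
            ((PowerSeries.coeff (R := ℂ) m (f ^ n)) / (n ! : ℂ)) • opSubst f (QQ f n) :=
          fun n _ => opSubst_smul _ _ _
        rw [Finset.sum_congr rfl this, Finset.sum_range_succ' _ m]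
        have h00 : ((PowerSeries.coeff (R := ℂ) m (f ^ 0)) / (0! : ℂ)) •
            opSubst f (QQ f 0) = 0 := by
          rw [QQ_zero, opSubst_one_poly, h0]
          simp
        rw [h00, add_zero, hW]
        refine Finset.sum_congr rfl fun n _ => ?_
        rw [key_step f h0 h1 (n+1) (by omega), Nat.add_sub_cancel, smul_smul]
        congr 1
        have hne : ((n:ℕ)! : ℂ) ≠ 0 := Nat.cast_ne_zero.2 (Nat.factorial_ne_zero _)
        have hne2 : (((n+1):ℕ)! : ℂ) ≠ 0 := Nat.cast_ne_zero.2 (Nat.factorial_ne_zero _)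
        field_simp
        rw [Nat.factorial_succ]
        push_cast
        ring
      rw [hLW, hRW]
    · rw [Polynomial.eval_sub, hL, hR, sub_eq_zero]
      rw [Polynomial.eval_smul, Polynomial.eval_pow, Polynomial.eval_X,
        Polynomial.eval_finset_sum]
      rw [Finset.sum_eq_single 0]
      · rw [QQ_zero, pow_zero, Polynomial.eval_smul, Polynomial.eval_one,
          PowerSeries.coeff_one]
        rcases Nat.eq_zero_or_pos m with rfl | hm
        · simp
        · rw [if_neg (by omega)]
          simp [zero_pow (by omega : m ≠ 0)]
      · intro n _ hn
        rw [Polynomial.eval_smul, QQ_eval_zero f n (by omega)]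
        simp
      · intro h
        simp at h
  have := sub_eq_zero.1 hsub
  exact this

/-- Lagrange inversion in operator form: `pₙ(x) = x (D/f(D))ⁿ x^{n-1}` for `n ≥ 1`,
where `y/f(y)` is the inverse of the power series `f(y)/y ∈ 1 + yℂ[[y]]`. -/
theorem lagrange_inversion (f : PowerSeries ℂ)
    (h0 : PowerSeries.coeff (R := ℂ) 0 f = 0) (h1 : PowerSeries.coeff (R := ℂ) 1 f = 1)
    (p : ℕ → Polynomial ℂ) (hp : IsGenFamily f p)
    (n : ℕ) (hn : 1 ≤ n) :
    p n = X * (opSubst (PowerSeries.mk fun k => PowerSeries.coeff (R := ℂ) (k + 1) f)⁻¹)^[n]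
      (X ^ (n - 1)) := by
  have hQ := QQ_genFamily f h0 h1
  have hpq := genFamily_unique f h0 h1 p (QQ f) hp hQ n
  rw [hpq]
  rw [show QQ f n = X * opSubst
      (((PowerSeries.mk fun k => PowerSeries.coeff (R := ℂ) (k + 1) f)⁻¹) ^ n) (X ^ (n - 1)) from by
    rw [QQ, if_neg (show ¬ n = 0 by omega)]]
  rw [opSubst_pow]
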